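/- arXiv:2512.14301 — 2 statements merged into one kernel-verified Lean document; each statement's English description precedes it below -/
import Mathlib

section
/- Fix Δ* > 0, η ∈ (0,1), N₂ ∈ ℕ, and let ϑ > 0. Then there exist N₁(ϑ) ∈ ℕ, Δ₀ ≥ Δ*, and constants γ_y > 0, γ_λ > 0 such that for every N₁ ≥ N₁(ϑ), every Δ ≥ Δ₀, and every n ∈ {1,…,⌊η·N₁⌋}: |𝒦_y(n)| ≤ γ_y·exp(−ϑ·Δ) and |𝒦_λ(n)| ≤ (γ_λ/Δ)·exp(−ϑ·Δ). -/
/-- The nodes `φ_n = exp(-Δ·λ_n)`. -/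
noncomputable def phi (lam : ℕ → ℝ) (Δ : ℝ) (n : ℕ) : ℝ := Real.exp (-Δ * lam n)

/-- Lagrange basis polynomial `L_n(z)` on the nodes `φ_1, …, φ_{N₁}`. -/
noncomputable def Lag (lam : ℕ → ℝ) (Δ : ℝ) (N₁ n : ℕ) (z : ℝ) : ℝ :=
  ∏ j ∈ (Finset.Icc 1 N₁).erase n, (z - phi lam Δ j) / (phi lam Δ n - phi lam Δ j)

/-- `L_n'(φ_n) = Σ_{k ≤ N₁, k ≠ n} 1/(φ_n − φ_k)`. -/
noncomputable def LagD (lam : ℕ → ℝ) (Δ : ℝ) (N₁ n : ℕ) : ℝ :=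
  ∑ k ∈ (Finset.Icc 1 N₁).erase n, 1 / (phi lam Δ n - phi lam Δ k)

/-- Hermite basis polynomial `H_n(z) = (1 − 2(z − φ_n)L_n'(φ_n))·L_n(z)²`. -/
noncomputable def HermH (lam : ℕ → ℝ) (Δ : ℝ) (N₁ n : ℕ) (z : ℝ) : ℝ :=
  (1 - 2 * (z - phi lam Δ n) * LagD lam Δ N₁ n) * (Lag lam Δ N₁ n z) ^ 2

/-- Hermite basis polynomial `H̃_n(z) = (z − φ_n)·L_n(z)²`. -/
noncomputable def HermHt (lam : ℕ → ℝ) (Δ : ℝ) (N₁ n : ℕ) (z : ℝ) : ℝ :=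
  (z - phi lam Δ n) * (Lag lam Δ N₁ n z) ^ 2

/-- First-order condition number for the amplitudes:
`𝒦_y(n) = Σ_{m=N₁+1}^{N₁+N₂} y_m·H_n(φ_m)`. -/
noncomputable def Ky (lam y : ℕ → ℝ) (Δ : ℝ) (N₁ N₂ n : ℕ) : ℝ :=
  ∑ m ∈ Finset.Icc (N₁ + 1) (N₁ + N₂), y m * HermH lam Δ N₁ n (phi lam Δ m)

/-- First-order condition number for the exponents:
`𝒦_λ(n) = −(Δ·y_n·φ_n)⁻¹·Σ_{m=N₁+1}^{N₁+N₂} y_m·H̃_n(φ_m)`. -/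
noncomputable def Kl (lam y : ℕ → ℝ) (Δ : ℝ) (N₁ N₂ n : ℕ) : ℝ :=
  -(Δ * y n * phi lam Δ n)⁻¹ *
    ∑ m ∈ Finset.Icc (N₁ + 1) (N₁ + N₂), y m * HermHt lam Δ N₁ n (phi lam Δ m)

/-! For `Δ` large the nodes halve, `2 φ_b ≤ φ_a` for `a < b`. Then every factor
`(φ_m - φ_j) / (φ_n - φ_j)` of `L_n(φ_m)`, `m > N₁`, has absolute value at most `2`, and the factor
`j = N₁` is at most `2 φ_{N₁} / φ_n ≤ 2 exp (-υ Δ (N₁² - n²))`. As `n ≤ η N₁`, the exponent of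
`L_n(φ_m)²` is at least `2 υ (1 - η)² N₁² Δ ≥ (N₁ + ϑ) Δ` for `N₁` large, and the surplus
`exp (-N₁ Δ)` absorbs both the `4 ^ N₁` from the other factors and the factor `1 + 4 N₁` that
`L_n'(φ_n) = O(N₁ / φ_n)` contributes to `H_n`. -/

open Finset Filter Real

def HasQuadraticGap (lam : ℕ → ℝ) (υ : ℝ) : Prop :=
  ∀ a b : ℕ, 1 ≤ a → a ≤ b → υ * ((b : ℝ) ^ 2 - (a : ℝ) ^ 2) ≤ lam b - lam a

structure IsHalving (x : ℕ → ℝ) : Prop where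
  pos : ∀ k, 0 < x k
  two_mul_le : ∀ a b : ℕ, 1 ≤ a → a < b → 2 * x b ≤ x a

namespace IsHalving

variable {x : ℕ → ℝ}

theorem apply_le_of_le (hx : IsHalving x) {a b : ℕ} (ha : 1 ≤ a) (hab : a ≤ b) : x b ≤ x a := by
  rcases hab.lt_or_eq with hlt | rfl
  · linarith [hx.two_mul_le a b ha hlt, hx.pos b]
  · rfl

theorem le_two_mul_abs_sub (hx : IsHalving x) {i j : ℕ} (hi : 1 ≤ i) (hj : 1 ≤ j) (hij : i ≠ j) :
    x i ≤ 2 * |x i - x j| := by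
  rcases hij.lt_or_gt with hlt | hgt
  · have := hx.two_mul_le i j hi hlt
    rw [abs_of_pos (by linarith [hx.pos j])]
    linarith [hx.pos j]
  · have := hx.two_mul_le j i hj hgt
    rw [abs_of_neg (by linarith [hx.pos i])]
    linarith [hx.pos i]

theorem abs_sum_one_div_sub_le (hx : IsHalving x) {n : ℕ} (hn : 1 ≤ n) (N : ℕ) :
    |∑ k ∈ (Icc 1 N).erase n, 1 / (x n - x k)| ≤ 2 * N / x n := by
  have hterm : ∀ k ∈ (Icc 1 N).erase n, |1 / (x n - x k)| ≤ 2 / x n := by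
    intro k hk
    obtain ⟨hkn, hk⟩ := mem_erase.mp hk
    have hsep := hx.le_two_mul_abs_sub hn (mem_Icc.mp hk).1 (Ne.symm hkn)
    rw [abs_div, abs_one, div_le_div_iff₀ (by linarith [hx.pos n]) (hx.pos n)]
    linarith
  have hcard : (((Icc 1 N).erase n).card : ℝ) ≤ N := by
    exact_mod_cast (card_erase_le.trans (by simp))
  calc |∑ k ∈ (Icc 1 N).erase n, 1 / (x n - x k)|
      ≤ ∑ k ∈ (Icc 1 N).erase n, |1 / (x n - x k)| := abs_sum_le_sum_abs _ _
    _ ≤ ((Icc 1 N).erase n).card * (2 / x n) := by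
        rw [← nsmul_eq_mul]; exact sum_le_card_nsmul _ _ _ hterm
    _ ≤ N * (2 / x n) := by gcongr; exact (div_pos two_pos (hx.pos n)).le
    _ = 2 * N / x n := by ring

theorem abs_prod_div_sub_le (hx : IsHalving x) {N n : ℕ} {z : ℝ} (hn : 1 ≤ n) (hnN : n < N)
    (hz0 : 0 ≤ z) (hzN : z ≤ x N) :
    |∏ j ∈ (Icc 1 N).erase n, (z - x j) / (x n - x j)| ≤ 2 ^ N * (x N / x n) := by
  set E := (Icc 1 N).erase n
  have hratio : 0 ≤ x N / x n := (div_pos (hx.pos N) (hx.pos n)).le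
  have hNE : N ∈ E := mem_erase.mpr ⟨hnN.ne', mem_Icc.mpr ⟨by omega, le_rfl⟩⟩
  have hfac : ∀ j ∈ E, |(z - x j) / (x n - x j)| ≤ x j / |x n - x j| := by
    intro j hj
    obtain ⟨-, hj⟩ := mem_erase.mp hj
    obtain ⟨hj1, hjN⟩ := mem_Icc.mp hj
    have hzj := hzN.trans (hx.apply_le_of_le hj1 hjN)
    rw [abs_div, abs_of_nonpos (by linarith)]
    gcongr
    linarith
  have hfac_two : ∀ j ∈ E, |(z - x j) / (x n - x j)| ≤ 2 := by
    intro j hj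
    obtain ⟨hjn, hj⟩ := mem_erase.mp hj
    have hsep := hx.le_two_mul_abs_sub (mem_Icc.mp hj).1 hn hjn
    rw [abs_sub_comm] at hsep
    refine (hfac j (mem_erase.mpr ⟨hjn, hj⟩)).trans ((div_le_iff₀ ?_).mpr hsep)
    linarith [hx.pos j]
  have hfac_N : |(z - x N) / (x n - x N)| ≤ 2 * (x N / x n) := by
    have hsep := hx.le_two_mul_abs_sub hn (by omega) hnN.ne
    refine (hfac N hNE).trans ?_
    rw [show 2 * (x N / x n) = x N / (x n / 2) by ring]
    exact div_le_div_of_nonneg_left (hx.pos N).le (half_pos (hx.pos n)) (by linarith)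
  have hcard : (E.erase N).card + 1 ≤ N := by
    rw [card_erase_add_one hNE]
    exact card_erase_le.trans (by simp)
  rw [← mul_prod_erase E _ hNE, abs_mul, abs_prod]
  calc |(z - x N) / (x n - x N)| * ∏ j ∈ E.erase N, |(z - x j) / (x n - x j)|
      ≤ 2 * (x N / x n) * ∏ _j ∈ E.erase N, (2 : ℝ) := by
        gcongr with j hj
        exact hfac_two j (mem_of_mem_erase hj)
    _ = 2 ^ ((E.erase N).card + 1) * (x N / x n) := by rw [prod_const, pow_succ]; ring
    _ ≤ 2 ^ N * (x N / x n) := by gcongr; norm_num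

end IsHalving

theorem phi_pos (lam : ℕ → ℝ) (Δ : ℝ) (n : ℕ) : 0 < phi lam Δ n := exp_pos _

theorem phi_div_phi_le {lam : ℕ → ℝ} {υ Δ : ℝ} {a b : ℕ} (hΔ : 0 ≤ Δ)
    (hab : υ * ((b : ℝ) ^ 2 - (a : ℝ) ^ 2) ≤ lam b - lam a) :
    phi lam Δ b / phi lam Δ a ≤ exp (-(υ * Δ * ((b : ℝ) ^ 2 - (a : ℝ) ^ 2))) := by
  rw [phi, phi, ← exp_sub, exp_le_exp]
  nlinarith [mul_le_mul_of_nonneg_left hab hΔ]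

theorem isHalving_phi {lam : ℕ → ℝ} {υ Δ : ℝ} (hgap : HasQuadraticGap lam υ) (hΔ : 0 ≤ Δ)
    (hυΔ : log 2 ≤ υ * Δ) : IsHalving (phi lam Δ) where
  pos := phi_pos lam Δ
  two_mul_le a b ha hab := by
    have hsq : (1 : ℝ) ≤ (b : ℝ) ^ 2 - (a : ℝ) ^ 2 := by
      have ha' : (1 : ℝ) ≤ a := by exact_mod_cast ha
      have hab' : (a : ℝ) + 1 ≤ b := by exact_mod_cast hab
      nlinarith
    have hυΔ0 : 0 ≤ υ * Δ := (log_nonneg one_le_two).trans hυΔ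
    have hratio : phi lam Δ b / phi lam Δ a ≤ 1 / 2 :=
      calc phi lam Δ b / phi lam Δ a ≤ exp (-(υ * Δ * ((b : ℝ) ^ 2 - (a : ℝ) ^ 2))) :=
            phi_div_phi_le hΔ (hgap a b ha hab.le)
        _ ≤ exp (-log 2) := exp_le_exp.mpr (by nlinarith [mul_le_mul_of_nonneg_left hsq hυΔ0])
        _ = 1 / 2 := by rw [exp_neg, exp_log two_pos, one_div]
    rw [div_le_iff₀ (phi_pos lam Δ a)] at hratio
    linarith

theorem four_pow_mul_exp_le {N : ℕ} {a ϑ Δ : ℝ} (hΔ : log 20 ≤ Δ) (ha : N + ϑ ≤ a) :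
    4 ^ N * exp (-a * Δ) ≤ exp (-ϑ * Δ) / 5 ^ N := by
  have hΔ0 : 0 ≤ Δ := (log_nonneg (by norm_num)).trans hΔ
  have h20 : exp (-Δ) ≤ 1 / 20 :=
    calc exp (-Δ) ≤ exp (-log 20) := exp_le_exp.mpr (by linarith)
      _ = 1 / 20 := by rw [exp_neg, exp_log (by norm_num), one_div]
  calc 4 ^ N * exp (-a * Δ) ≤ 4 ^ N * exp (-(N + ϑ) * Δ) := by gcongr
    _ = (4 * exp (-Δ)) ^ N * exp (-ϑ * Δ) := by
        rw [mul_pow, ← exp_nat_mul, mul_assoc, ← exp_add]; ring_nf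
    _ ≤ (1 / 5) ^ N * exp (-ϑ * Δ) := by gcongr; linarith
    _ = exp (-ϑ * Δ) / 5 ^ N := by rw [one_div_pow]; ring

section LagrangeHermite

variable {lam : ℕ → ℝ} {υ Δ ϑ : ℝ} {N n m : ℕ}

theorem sq_Lag_phi_le (hgap : HasQuadraticGap lam υ) (hΔ : 0 ≤ Δ) (hυΔ : log 2 ≤ υ * Δ)
    (hn : 1 ≤ n) (hnN : n < N) (hNm : N < m) :
    Lag lam Δ N n (phi lam Δ m) ^ 2 ≤
      4 ^ N * exp (-(2 * υ * ((N : ℝ) ^ 2 - (n : ℝ) ^ 2)) * Δ) := by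
  have hx := isHalving_phi hgap hΔ hυΔ
  have hLag : |Lag lam Δ N n (phi lam Δ m)| ≤
      2 ^ N * exp (-(υ * Δ * ((N : ℝ) ^ 2 - (n : ℝ) ^ 2))) :=
    (hx.abs_prod_div_sub_le hn hnN (phi_pos lam Δ m).le
      (hx.apply_le_of_le (by omega) hNm.le)).trans
        (by gcongr; exact phi_div_phi_le hΔ (hgap n N hn hnN.le))
  calc Lag lam Δ N n (phi lam Δ m) ^ 2 = |Lag lam Δ N n (phi lam Δ m)| ^ 2 := (sq_abs _).symm
    _ ≤ (2 ^ N * exp (-(υ * Δ * ((N : ℝ) ^ 2 - (n : ℝ) ^ 2)))) ^ 2 := by gcongr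
    _ = 4 ^ N * exp (-(2 * υ * ((N : ℝ) ^ 2 - (n : ℝ) ^ 2)) * Δ) := by
        rw [mul_pow, ← pow_mul, pow_mul', ← exp_nat_mul]
        congr 2 <;> push_cast <;> ring

theorem sq_Lag_phi_le_exp (hgap : HasQuadraticGap lam υ) (hΔ : log 20 ≤ Δ)
    (hυΔ : log 2 ≤ υ * Δ) (hn : 1 ≤ n) (hnN : n < N) (hNm : N < m)
    (hNϑ : N + ϑ ≤ 2 * υ * ((N : ℝ) ^ 2 - (n : ℝ) ^ 2)) :
    Lag lam Δ N n (phi lam Δ m) ^ 2 ≤ exp (-ϑ * Δ) / 5 ^ N :=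
  (sq_Lag_phi_le hgap ((log_nonneg (by norm_num)).trans hΔ) hυΔ hn hnN hNm).trans
    (four_pow_mul_exp_le hΔ hNϑ)

theorem abs_phi_sub_phi_le (hgap : HasQuadraticGap lam υ) (hΔ : 0 ≤ Δ) (hυΔ : log 2 ≤ υ * Δ)
    (hn : 1 ≤ n) (hnm : n < m) : |phi lam Δ m - phi lam Δ n| ≤ phi lam Δ n :=
  abs_sub_le_of_nonneg_of_le (phi_pos lam Δ m).le
    ((isHalving_phi hgap hΔ hυΔ).apply_le_of_le hn hnm.le) (phi_pos lam Δ n).le le_rfl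

theorem abs_HermH_phi_le (hgap : HasQuadraticGap lam υ) (hΔ : log 20 ≤ Δ)
    (hυΔ : log 2 ≤ υ * Δ) (hn : 1 ≤ n) (hnN : n < N) (hNm : N < m)
    (hNϑ : N + ϑ ≤ 2 * υ * ((N : ℝ) ^ 2 - (n : ℝ) ^ 2)) :
    |HermH lam Δ N n (phi lam Δ m)| ≤ exp (-ϑ * Δ) := by
  have hΔ0 : 0 ≤ Δ := (log_nonneg (by norm_num)).trans hΔ
  have hφn := phi_pos lam Δ n
  have hdist := abs_phi_sub_phi_le hgap hΔ0 hυΔ hn (hnN.trans hNm)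
  have hLagD : |LagD lam Δ N n| ≤ 2 * N / phi lam Δ n :=
    (isHalving_phi hgap hΔ0 hυΔ).abs_sum_one_div_sub_le hn N
  have hfac : |1 - 2 * (phi lam Δ m - phi lam Δ n) * LagD lam Δ N n| ≤ 5 ^ N :=
    calc |1 - 2 * (phi lam Δ m - phi lam Δ n) * LagD lam Δ N n|
        ≤ 1 + 2 * |phi lam Δ m - phi lam Δ n| * |LagD lam Δ N n| := by
          simpa [abs_mul] using abs_sub (1 : ℝ) (2 * (phi lam Δ m - phi lam Δ n) * LagD lam Δ N n)
      _ ≤ 1 + 2 * phi lam Δ n * (2 * N / phi lam Δ n) := by gcongr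
      _ = 1 + N * 4 := by field_simp; ring
      _ ≤ (1 + 4) ^ N := one_add_mul_le_pow (by norm_num) N
      _ = 5 ^ N := by norm_num
  rw [HermH, abs_mul, abs_sq]
  calc |1 - 2 * (phi lam Δ m - phi lam Δ n) * LagD lam Δ N n| * Lag lam Δ N n (phi lam Δ m) ^ 2
      ≤ 5 ^ N * (exp (-ϑ * Δ) / 5 ^ N) :=
        mul_le_mul hfac (sq_Lag_phi_le_exp hgap hΔ hυΔ hn hnN hNm hNϑ) (sq_nonneg _)
          (by positivity)
    _ = exp (-ϑ * Δ) := by field_simp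

theorem abs_HermHt_phi_le (hgap : HasQuadraticGap lam υ) (hΔ : log 20 ≤ Δ)
    (hυΔ : log 2 ≤ υ * Δ) (hn : 1 ≤ n) (hnN : n < N) (hNm : N < m)
    (hNϑ : N + ϑ ≤ 2 * υ * ((N : ℝ) ^ 2 - (n : ℝ) ^ 2)) :
    |HermHt lam Δ N n (phi lam Δ m)| ≤ phi lam Δ n * exp (-ϑ * Δ) := by
  have hΔ0 : 0 ≤ Δ := (log_nonneg (by norm_num)).trans hΔ
  rw [HermHt, abs_mul, abs_sq]
  calc |phi lam Δ m - phi lam Δ n| * Lag lam Δ N n (phi lam Δ m) ^ 2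
      ≤ phi lam Δ n * (exp (-ϑ * Δ) / 5 ^ N) :=
        mul_le_mul (abs_phi_sub_phi_le hgap hΔ0 hυΔ hn (hnN.trans hNm))
          (sq_Lag_phi_le_exp hgap hΔ hυΔ hn hnN hNm hNϑ) (sq_nonneg _) (phi_pos lam Δ n).le
    _ ≤ phi lam Δ n * exp (-ϑ * Δ) :=
        mul_le_mul_of_nonneg_left (div_le_self (exp_pos _).le (one_le_pow₀ (by norm_num)))
          (phi_pos lam Δ n).le

end LagrangeHermite

theorem abs_sum_mul_le_card_mul {ι : Type*} {s : Finset ι} {y f : ι → ℝ} {ℓ B : ℝ}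
    (hy : ∀ m ∈ s, |y m| ≤ ℓ) (hf : ∀ m ∈ s, |f m| ≤ B) :
    |∑ m ∈ s, y m * f m| ≤ s.card * (ℓ * B) := by
  rw [← nsmul_eq_mul]
  refine (abs_sum_le_sum_abs _ _).trans (sum_le_card_nsmul _ _ _ fun m hm => ?_)
  rw [abs_mul]
  exact mul_le_mul (hy m hm) (hf m hm) (abs_nonneg _) ((abs_nonneg _).trans (hy m hm))

theorem abs_Ky_le {lam y : ℕ → ℝ} {Δ ℓ B : ℝ} {N₁ N₂ n : ℕ} (hy : ∀ m, N₁ < m → |y m| ≤ ℓ)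
    (hH : ∀ m, N₁ < m → |HermH lam Δ N₁ n (phi lam Δ m)| ≤ B) :
    |Ky lam y Δ N₁ N₂ n| ≤ ℓ * N₂ * B := by
  have h := abs_sum_mul_le_card_mul (s := Icc (N₁ + 1) (N₁ + N₂))
    (fun m hm => hy m (by simp at hm; omega)) (fun m hm => hH m (by simp at hm; omega))
  simp only [Nat.card_Icc, Nat.add_sub_add_right, Nat.add_sub_cancel_left] at h
  rw [Ky]
  linarith

theorem abs_Kl_le {lam y : ℕ → ℝ} {Δ ℓ E : ℝ} {N₁ N₂ n : ℕ} (hΔ : 0 < Δ) (hℓ : 0 < ℓ)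
    (hE : 0 ≤ E) (hyn : ℓ⁻¹ ≤ |y n|) (hy : ∀ m, N₁ < m → |y m| ≤ ℓ)
    (hHt : ∀ m, N₁ < m → |HermHt lam Δ N₁ n (phi lam Δ m)| ≤ phi lam Δ n * E) :
    |Kl lam y Δ N₁ N₂ n| ≤ ℓ ^ 2 * N₂ / Δ * E := by
  have hφ := phi_pos lam Δ n
  have hyn0 : 0 < |y n| := (inv_pos.mpr hℓ).trans_le hyn
  have hsum := abs_sum_mul_le_card_mul (s := Icc (N₁ + 1) (N₁ + N₂))
    (fun m hm => hy m (by simp at hm; omega)) (fun m hm => hHt m (by simp at hm; omega))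
  simp only [Nat.card_Icc, Nat.add_sub_add_right, Nat.add_sub_cancel_left] at hsum
  rw [Kl, abs_mul, abs_neg, abs_inv, abs_mul, abs_mul, abs_of_pos hΔ, abs_of_pos hφ]
  calc (Δ * |y n| * phi lam Δ n)⁻¹ * |∑ m ∈ Icc (N₁ + 1) (N₁ + N₂),
        y m * HermHt lam Δ N₁ n (phi lam Δ m)|
      ≤ (Δ * |y n| * phi lam Δ n)⁻¹ * (N₂ * (ℓ * (phi lam Δ n * E))) := by gcongr
    _ = ℓ * N₂ / Δ * E * |y n|⁻¹ := by field_simp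
    _ ≤ ℓ * N₂ / Δ * E * ℓ := by gcongr; exact inv_le_of_inv_le₀ hℓ hyn
    _ = ℓ ^ 2 * N₂ / Δ * E := by ring

theorem eventually_add_le_mul_sq {c : ℝ} (hc : 0 < c) (t : ℝ) :
    ∀ᶠ N : ℕ in atTop, (N : ℝ) + t ≤ c * (N : ℝ) ^ 2 := by
  have h : Tendsto (fun N : ℕ => (N : ℝ) * (c * N - 1)) atTop atTop :=
    tendsto_natCast_atTop_atTop.atTop_mul_atTop₀
      (tendsto_atTop_add_const_right _ _ (tendsto_natCast_atTop_atTop.const_mul_atTop hc))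
  filter_upwards [h.eventually_ge_atTop t] with N hN
  linarith

theorem sq_one_sub_mul_le_sq_sub_sq {a b η : ℝ} (ha : 0 ≤ a) (hb : 0 ≤ b) (hη : η ≤ 1)
    (hab : a ≤ η * b) : ((1 - η) * b) ^ 2 ≤ b ^ 2 - a ^ 2 := by
  have h : (1 - η) * b ≤ b - a := by linarith
  nlinarith [mul_self_le_mul_self (by nlinarith) h, mul_nonneg ha (by nlinarith : 0 ≤ b - a)]

theorem lt_of_le_floor_mul {η : ℝ} {n N : ℕ} (hη : η < 1) (hn : 1 ≤ n)
    (h : n ≤ ⌊η * N⌋₊) : n < N := by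
  have hN : (0 : ℝ) < N := by
    have : N ≠ 0 := by rintro rfl; simp at h; omega
    positivity
  have hnη : (n : ℝ) ≤ η * N := (Nat.le_floor_iff' (by omega)).mp h
  exact_mod_cast (show (n : ℝ) < N by nlinarith)

theorem stmt3_general (lam y : ℕ → ℝ) (υ Υ ℓ Δs η ϑ : ℝ) (N₂ : ℕ)
    (hυ : 0 < υ)
    (hgap : ∀ n m : ℕ, 1 ≤ n → n ≤ m →
      υ * ((m : ℝ) ^ 2 - (n : ℝ) ^ 2) ≤ lam m - lam n ∧
      lam m - lam n ≤ Υ * ((m : ℝ) ^ 2 - (n : ℝ) ^ 2))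
    (hℓ : 1 < ℓ) (hy : ∀ n : ℕ, 1 ≤ n → ℓ⁻¹ ≤ |y n| ∧ |y n| ≤ ℓ)
    (hη1 : η < 1) (hN₂ : 1 ≤ N₂) :
    ∃ Nϑ : ℕ, ∃ Δ₀ : ℝ, Δs ≤ Δ₀ ∧
      ∃ γy γl : ℝ, 0 < γy ∧ 0 < γl ∧
        ∀ N₁ : ℕ, Nϑ ≤ N₁ → ∀ Δ : ℝ, Δ₀ ≤ Δ →
          ∀ n : ℕ, 1 ≤ n → n ≤ ⌊η * (N₁ : ℝ)⌋₊ →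
            |Ky lam y Δ N₁ N₂ n| ≤ γy * Real.exp (-ϑ * Δ) ∧
            |Kl lam y Δ N₁ N₂ n| ≤ γl / Δ * Real.exp (-ϑ * Δ) := by
  have hη : 0 < 1 - η := sub_pos.mpr hη1
  obtain ⟨Nϑ, hNϑ⟩ := eventually_atTop.mp
    (eventually_add_le_mul_sq (c := 2 * υ * (1 - η) ^ 2) (by positivity) ϑ)
  obtain ⟨Δ₀, hΔ₀⟩ := eventually_atTop.mp ((eventually_ge_atTop Δs).and
    ((eventually_ge_atTop (log 20)).and
      ((tendsto_id.const_mul_atTop hυ).eventually_ge_atTop (log 2))))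
  have hℓ0 : 0 < ℓ := one_pos.trans hℓ
  have hN₂0 : (0 : ℝ) < N₂ := by exact_mod_cast hN₂
  refine ⟨Nϑ, Δ₀, (hΔ₀ Δ₀ le_rfl).1, ℓ * N₂, ℓ ^ 2 * N₂, by positivity, by positivity, ?_⟩
  intro N₁ hN₁ Δ hΔ n hn hnN₁
  obtain ⟨-, hΔ20, hυΔ⟩ := hΔ₀ Δ hΔ
  have hgap' : HasQuadraticGap lam υ := fun a b ha hab => (hgap a b ha hab).1
  have hnN : n < N₁ := lt_of_le_floor_mul hη1 hn hnN₁
  have hNϑ' : N₁ + ϑ ≤ 2 * υ * ((N₁ : ℝ) ^ 2 - (n : ℝ) ^ 2) := by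
    have := sq_one_sub_mul_le_sq_sub_sq (Nat.cast_nonneg n) (Nat.cast_nonneg N₁) hη1.le
      ((Nat.le_floor_iff' (by omega)).mp hnN₁)
    nlinarith [hNϑ N₁ hN₁]
  have hym : ∀ m, N₁ < m → |y m| ≤ ℓ := fun m hm => (hy m (by omega)).2
  exact ⟨abs_Ky_le hym fun m hm => abs_HermH_phi_le hgap' hΔ20 hυΔ hn hnN hm hNϑ',
    abs_Kl_le ((log_pos (by norm_num)).trans_le hΔ20) hℓ0 (exp_pos _).le (hy n hn).1 hym
      fun m hm => abs_HermHt_phi_le hgap' hΔ20 hυΔ hn hnN hm hNϑ'⟩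

theorem stmt3 (lam y : ℕ → ℝ) (υ Υ ℓ Δs η ϑ : ℝ) (N₂ : ℕ)
    (hυ : 0 < υ) (hυΥ : υ ≤ Υ)
    (hmono : ∀ n m : ℕ, 1 ≤ n → n < m → lam n < lam m)
    (hgap : ∀ n m : ℕ, 1 ≤ n → n ≤ m →
      υ * ((m : ℝ) ^ 2 - (n : ℝ) ^ 2) ≤ lam m - lam n ∧
      lam m - lam n ≤ Υ * ((m : ℝ) ^ 2 - (n : ℝ) ^ 2))
    (hℓ : 1 < ℓ) (hy : ∀ n : ℕ, 1 ≤ n → ℓ⁻¹ ≤ |y n| ∧ |y n| ≤ ℓ)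
    (hΔs : 0 < Δs) (hη : 0 < η) (hη1 : η < 1) (hN₂ : 1 ≤ N₂) (hϑ : 0 < ϑ) :
    ∃ Nϑ : ℕ, ∃ Δ₀ : ℝ, Δs ≤ Δ₀ ∧
      ∃ γy γl : ℝ, 0 < γy ∧ 0 < γl ∧
        ∀ N₁ : ℕ, Nϑ ≤ N₁ → ∀ Δ : ℝ, Δ₀ ≤ Δ →
          ∀ n : ℕ, 1 ≤ n → n ≤ ⌊η * (N₁ : ℝ)⌋₊ →
            |Ky lam y Δ N₁ N₂ n| ≤ γy * Real.exp (-ϑ * Δ) ∧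
            |Kl lam y Δ N₁ N₂ n| ≤ γl / Δ * Real.exp (-ϑ * Δ) :=
  stmt3_general lam y υ Υ ℓ Δs η ϑ N₂ hυ hgap hℓ hy hη1 hN₂
end

section
/- For every Δ > 0, every N₁ ∈ ℕ, and every n ∈ {1,…,N₁}: L_n(φ_{N₁+1})² = exp(−2·Δ·Σ_{j=n+1}^{N₁}(λ_j − λ_n) − 2·θ¹_{n,Δ,N₁} + 2·θ²_{n,Δ} + 2·θ³_{n,Δ,N₁}). Moreover, for every Δ* > 0 and every η ∈ (0,1] there exist C > 0 and N₀ ∈ ℕ such that for all Δ ≥ Δ*, all N₁ ≥ N₀, and all n ∈ {1,…,⌊η·N₁⌋}: L_n(φ_{N₁+1})² ≤ C·exp(−2·υ·Δ·Ψ(⌊η·N₁⌋; N₁)). -/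
open MeasureTheory

/-- `g(x) = −ln(1 − e^{−x})`. -/
noncomputable def gfun (x : ℝ) : ℝ := -Real.log (1 - Real.exp (-x))

/-- `𝒢_{w₁,w₂}(ζ) = ∫_{w₁}^{w₂} g(ζ·x) dx` for finite endpoints. -/
noncomputable def Gint (w₁ w₂ ζ : ℝ) : ℝ := ∫ x in Set.Ioo w₁ w₂, gfun (ζ * x)

/-- `𝒢_{w₁,∞}(ζ) = ∫_{w₁}^{∞} g(ζ·x) dx`. -/
noncomputable def GintInf (w₁ ζ : ℝ) : ℝ := ∫ x in Set.Ioi w₁, gfun (ζ * x)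

/-- `θ¹_{n,Δ,N₁} = Σ_{j ∈ {1,…,N₁}, j≠n} g(Δ·(λ_{N₁+1} − λ_j))`. -/
noncomputable def theta1 (lam : ℕ → ℝ) (Δ : ℝ) (N₁ n : ℕ) : ℝ :=
  ∑ j ∈ (Finset.Icc 1 N₁).erase n, gfun (Δ * (lam (N₁ + 1) - lam j))

/-- `θ²_{n,Δ} = Σ_{j=1}^{n−1} g(Δ·(λ_n − λ_j))`. -/
noncomputable def theta2 (lam : ℕ → ℝ) (Δ : ℝ) (n : ℕ) : ℝ :=
  ∑ j ∈ Finset.Icc 1 (n - 1), gfun (Δ * (lam n - lam j))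

/-- `θ³_{n,Δ,N₁} = Σ_{j=n+1}^{N₁} g(Δ·(λ_j − λ_n))`. -/
noncomputable def theta3 (lam : ℕ → ℝ) (Δ : ℝ) (N₁ n : ℕ) : ℝ :=
  ∑ j ∈ Finset.Icc (n + 1) N₁, gfun (Δ * (lam j - lam n))

/-- `Ψ(n; N₁) = Σ_{j=n+1}^{N₁} (j² − n²)`. -/
noncomputable def Psi (n N₁ : ℕ) : ℝ :=
  ∑ j ∈ Finset.Icc (n + 1) N₁, ((j : ℝ) ^ 2 - (n : ℝ) ^ 2)

/-! For `λ_a < λ_b` one has `φ_a - φ_b = φ_a · exp(-g(Δ(λ_b - λ_a)))`, so every factor of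
`L_n(φ_{N₁+1})²` is an exponential and adding up the exponents gives the identity.
For the bound, `θ¹ ≥ 0`, while `g(x) ≤ e^{-x} / (1 - e^{-c})` for `x ≥ c` together with
`λ_b - λ_a ≥ υ (b - a)` dominates `θ²` and `θ³` by a geometric series, uniformly in `n`, `N₁`
and `Δ ≥ Δ*`. The remaining exponent `-2Δ Σ_{j>n} (λ_j - λ_n)` is at most `-2υΔ Ψ(n; N₁)`, and
`Ψ(·; N₁)` is antitone. -/

open Finset Real

lemma exp_neg_sub_exp_neg {x y : ℝ} (h : x < y) :
    exp (-x) - exp (-y) = exp (-x - gfun (y - x)) := by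
  have h1 : 0 < 1 - exp (-(y - x)) := by
    rw [sub_pos, exp_lt_one_iff]
    linarith
  rw [gfun, sub_neg_eq_add, exp_add, exp_log h1, mul_sub, mul_one, ← exp_add]
  ring_nf

section Identity

variable {lam : ℕ → ℝ} {Δ : ℝ}

lemma sq_phi_sub_phi (hΔ : 0 < Δ) {a b : ℕ} (h : lam a < lam b) :
    (phi lam Δ a - phi lam Δ b) ^ 2 = exp (2 * (-Δ * lam a - gfun (Δ * (lam b - lam a)))) := by
  have hab : Δ * lam a < Δ * lam b := mul_lt_mul_of_pos_left h hΔ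
  rw [phi, phi, neg_mul, neg_mul, exp_neg_sub_exp_neg hab, ← exp_nat_mul, mul_sub]
  push_cast
  ring_nf

lemma sq_lagFactor_of_lt (hΔ : 0 < Δ) {j n m : ℕ} (hjn : lam j < lam n) (hjm : lam j < lam m) :
    ((phi lam Δ m - phi lam Δ j) / (phi lam Δ n - phi lam Δ j)) ^ 2 =
      exp (2 * gfun (Δ * (lam n - lam j)) - 2 * gfun (Δ * (lam m - lam j))) := by
  rw [div_pow, sub_sq_comm, sub_sq_comm (phi lam Δ n), sq_phi_sub_phi hΔ hjm,
    sq_phi_sub_phi hΔ hjn, ← exp_sub]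
  ring_nf

lemma sq_lagFactor_of_gt (hΔ : 0 < Δ) {j n m : ℕ} (hnj : lam n < lam j) (hjm : lam j < lam m) :
    ((phi lam Δ m - phi lam Δ j) / (phi lam Δ n - phi lam Δ j)) ^ 2 =
      exp (-2 * Δ * (lam j - lam n) + 2 * gfun (Δ * (lam j - lam n)) -
        2 * gfun (Δ * (lam m - lam j))) := by
  rw [div_pow, sub_sq_comm, sq_phi_sub_phi hΔ hjm, sq_phi_sub_phi hΔ hnj, ← exp_sub]
  ring_nf

@[to_additive]
lemma prod_Icc_erase_eq_mul {M : Type*} [CommMonoid M] (f : ℕ → M) {n N : ℕ} (hn : 1 ≤ n)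
    (hnN : n ≤ N) :
    ∏ j ∈ (Icc 1 N).erase n, f j = (∏ j ∈ Icc 1 (n - 1), f j) * ∏ j ∈ Icc (n + 1) N, f j := by
  rw [← prod_union]
  · congr 1
    ext j
    simp only [mem_erase, mem_Icc, mem_union]
    omega
  · rw [disjoint_left]
    intro j hj1 hj2
    simp only [mem_Icc] at hj1 hj2
    omega

lemma Lag_sq_eq (hmono : ∀ n m : ℕ, 1 ≤ n → n < m → lam n < lam m) (hΔ : 0 < Δ) {N n : ℕ}
    (hn : 1 ≤ n) (hnN : n ≤ N) :
    (Lag lam Δ N n (phi lam Δ (N + 1))) ^ 2 =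
      exp (-2 * Δ * (∑ j ∈ Icc (n + 1) N, (lam j - lam n)) -
        2 * theta1 lam Δ N n + 2 * theta2 lam Δ n + 2 * theta3 lam Δ N n) := by
  have hlow : ∀ j ∈ Icc 1 (n - 1), 1 ≤ j ∧ j < n ∧ j < N + 1 := fun j hj => by
    simp only [mem_Icc] at hj; omega
  have hhigh : ∀ j ∈ Icc (n + 1) N, 1 ≤ j ∧ n < j ∧ j < N + 1 := fun j hj => by
    simp only [mem_Icc] at hj; omega
  rw [Lag, ← prod_pow, prod_Icc_erase_eq_mul _ hn hnN,
    prod_congr rfl fun j hj => sq_lagFactor_of_lt hΔ (hmono _ _ (hlow j hj).1 (hlow j hj).2.1)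
      (hmono _ _ (hlow j hj).1 (hlow j hj).2.2),
    prod_congr rfl fun j hj => sq_lagFactor_of_gt hΔ (hmono _ _ hn (hhigh j hj).2.1)
      (hmono _ _ (hhigh j hj).1 (hhigh j hj).2.2),
    ← exp_sum, ← exp_sum, ← exp_add, theta1, theta2, theta3, sum_Icc_erase_eq_add _ hn hnN]
  congr 1
  simp only [sum_add_distrib, sum_sub_distrib, ← mul_sum]
  ring

end Identity

lemma gfun_nonneg {x : ℝ} (hx : 0 < x) : 0 ≤ gfun x := by
  rw [gfun, neg_nonneg]
  exact log_nonpos (by linarith [exp_lt_one_iff.2 (neg_lt_zero.2 hx)]) (by linarith [exp_pos (-x)])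

lemma gfun_le_of_le {c x : ℝ} (hc : 0 < c) (hcx : c ≤ x) :
    gfun x ≤ (1 - exp (-c))⁻¹ * exp (-x) := by
  have hx : 0 < 1 - exp (-x) := by linarith [exp_lt_one_iff.2 (neg_lt_zero.2 (hc.trans_le hcx))]
  have hc' : 0 < 1 - exp (-c) := by linarith [exp_lt_one_iff.2 (neg_lt_zero.2 hc)]
  -- `-log (1 - t) ≤ t / (1 - t)`, from `1 - 1/y ≤ log y`
  have hlog : gfun x ≤ (1 - exp (-x))⁻¹ * exp (-x) := by
    have := one_sub_inv_le_log_of_pos hx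
    rw [gfun]
    field_simp at this ⊢
    linarith
  refine hlog.trans (mul_le_mul_of_nonneg_right ?_ (exp_pos _).le)
  exact inv_anti₀ hc' (by linarith [exp_le_exp.2 (neg_le_neg hcx)])

lemma sum_pow_le_inv_one_sub {ι : Type*} {r : ℝ} (h0 : 0 ≤ r) (h1 : r < 1) {s : Finset ι}
    {e : ι → ℕ}
    (he : Set.InjOn e s) : ∑ j ∈ s, r ^ e j ≤ (1 - r)⁻¹ := by
  rw [← sum_image he, ← tsum_geometric_of_lt_one h0 h1]
  exact (summable_geometric_of_lt_one h0 h1).sum_le_tsum _ fun k _ => pow_nonneg h0 k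

section Bound

variable {lam : ℕ → ℝ} {υ : ℝ} (hυ : 0 < υ)
  (hgap : ∀ n m : ℕ, 1 ≤ n → n ≤ m → υ * ((m : ℝ) ^ 2 - (n : ℝ) ^ 2) ≤ lam m - lam n)
  {Δs Δ : ℝ} (hΔs : 0 < Δs) (hΔ : Δs ≤ Δ)
include hυ hgap hΔs hΔ

lemma gfun_gap_le {a b : ℕ} (ha : 1 ≤ a) (hab : a < b) :
    gfun (Δ * (lam b - lam a)) ≤ (1 - exp (-(Δs * υ)))⁻¹ * exp (-(Δs * υ)) ^ (b - a) := by
  have hba : ((b - a : ℕ) : ℝ) ≤ (b : ℝ) ^ 2 - (a : ℝ) ^ 2 := by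
    have ha' : (1 : ℝ) ≤ a := by exact_mod_cast ha
    have hab' : (a : ℝ) < b := by exact_mod_cast hab
    rw [Nat.cast_sub hab.le]
    nlinarith
  have hone : (1 : ℝ) ≤ (b - a : ℕ) := by exact_mod_cast Nat.sub_pos_of_lt hab
  have hc : 0 < Δs * υ := mul_pos hΔs hυ
  have hlin : Δs * υ * (b - a : ℕ) ≤ Δ * (lam b - lam a) := by
    have hgap_ab := hgap a b ha hab.le
    have hlam : 0 ≤ lam b - lam a := by nlinarith
    calc Δs * υ * (b - a : ℕ) ≤ Δs * (lam b - lam a) := by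
          rw [mul_assoc]; gcongr; exact (mul_le_mul_of_nonneg_left hba hυ.le).trans hgap_ab
      _ ≤ Δ * (lam b - lam a) := by gcongr
  calc gfun (Δ * (lam b - lam a))
      ≤ (1 - exp (-(Δs * υ)))⁻¹ * exp (-(Δ * (lam b - lam a))) :=
        gfun_le_of_le hc ((le_mul_of_one_le_right hc.le hone).trans hlin)
    _ ≤ (1 - exp (-(Δs * υ)))⁻¹ * exp (-(Δs * υ)) ^ (b - a) := by
        rw [← exp_nat_mul]
        have : 0 < 1 - exp (-(Δs * υ)) := by linarith [exp_lt_one_iff.2 (neg_lt_zero.2 hc)]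
        gcongr
        linarith

lemma sum_gfun_gap_le {s : Finset ℕ} {a b : ℕ → ℕ} (hab : ∀ j ∈ s, 1 ≤ a j ∧ a j < b j)
    (hinj : Set.InjOn (fun j => b j - a j) s) :
    ∑ j ∈ s, gfun (Δ * (lam (b j) - lam (a j))) ≤
      (1 - exp (-(Δs * υ)))⁻¹ * (1 - exp (-(Δs * υ)))⁻¹ := by
  have hr := exp_lt_one_iff.2 (neg_lt_zero.2 (mul_pos hΔs hυ))
  have : 0 < 1 - exp (-(Δs * υ)) := by linarith
  calc ∑ j ∈ s, gfun (Δ * (lam (b j) - lam (a j)))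
      ≤ ∑ j ∈ s, (1 - exp (-(Δs * υ)))⁻¹ * exp (-(Δs * υ)) ^ (b j - a j) :=
        sum_le_sum fun j hj => gfun_gap_le hυ hgap hΔs hΔ (hab j hj).1 (hab j hj).2
    _ ≤ (1 - exp (-(Δs * υ)))⁻¹ * (1 - exp (-(Δs * υ)))⁻¹ := by
        rw [← mul_sum]
        gcongr
        exact sum_pow_le_inv_one_sub (exp_pos _).le hr hinj

lemma theta2_le (n : ℕ) :
    theta2 lam Δ n ≤ (1 - exp (-(Δs * υ)))⁻¹ * (1 - exp (-(Δs * υ)))⁻¹ :=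
  sum_gfun_gap_le (a := id) (b := fun _ => n) hυ hgap hΔs hΔ
    (fun j hj => by simp only [mem_Icc] at hj; simp only [id]; omega)
    (fun x hx y hy hxy => by simp only [coe_Icc, Set.mem_Icc, id] at hx hy hxy; omega)

lemma theta3_le {n : ℕ} (hn : 1 ≤ n) (N : ℕ) :
    theta3 lam Δ N n ≤ (1 - exp (-(Δs * υ)))⁻¹ * (1 - exp (-(Δs * υ)))⁻¹ :=
  sum_gfun_gap_le (a := fun _ => n) (b := id) hυ hgap hΔs hΔ
    (fun j hj => by simp only [mem_Icc] at hj; simp only [id]; omega)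
    (fun x hx y hy hxy => by simp only [coe_Icc, Set.mem_Icc, id] at hx hy hxy; omega)

end Bound

lemma theta1_nonneg {lam : ℕ → ℝ} (hmono : ∀ n m : ℕ, 1 ≤ n → n < m → lam n < lam m) {Δ : ℝ}
    (hΔ : 0 < Δ) (N n : ℕ) : 0 ≤ theta1 lam Δ N n :=
  sum_nonneg fun j hj => by
    have hj := mem_Icc.1 (mem_of_mem_erase hj)
    exact gfun_nonneg (mul_pos hΔ (sub_pos.2 (hmono j (N + 1) hj.1 (by omega))))

lemma mul_Psi_le_sum_sub {lam : ℕ → ℝ} {υ : ℝ}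
    (hgap : ∀ n m : ℕ, 1 ≤ n → n ≤ m → υ * ((m : ℝ) ^ 2 - (n : ℝ) ^ 2) ≤ lam m - lam n)
    {n : ℕ} (hn : 1 ≤ n) (N : ℕ) : υ * Psi n N ≤ ∑ j ∈ Icc (n + 1) N, (lam j - lam n) := by
  rw [Psi, mul_sum]
  exact sum_le_sum fun j hj => hgap n j hn (by simp only [mem_Icc] at hj; omega)

lemma Psi_anti {n m : ℕ} (hnm : n ≤ m) (N : ℕ) : Psi m N ≤ Psi n N := by
  have hsq : ∀ {k j : ℕ}, k ≤ j → (k : ℝ) ^ 2 ≤ (j : ℝ) ^ 2 := fun h => by gcongr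
  calc Psi m N ≤ ∑ j ∈ Icc (m + 1) N, ((j : ℝ) ^ 2 - (n : ℝ) ^ 2) :=
        sum_le_sum fun j _ => by linarith [hsq hnm]
    _ ≤ Psi n N :=
        sum_le_sum_of_subset_of_nonneg (Icc_subset_Icc (by omega) le_rfl) fun j hj _ => by
          simp only [mem_Icc] at hj; linarith [hsq (show n ≤ j by omega)]

lemma Lag_sq_le {lam : ℕ → ℝ} {υ : ℝ} (hυ : 0 < υ)
    (hmono : ∀ n m : ℕ, 1 ≤ n → n < m → lam n < lam m)
    (hgap : ∀ n m : ℕ, 1 ≤ n → n ≤ m → υ * ((m : ℝ) ^ 2 - (n : ℝ) ^ 2) ≤ lam m - lam n)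
    {Δs : ℝ} (hΔs : 0 < Δs) :
    ∃ C : ℝ, 0 < C ∧ ∀ Δ : ℝ, Δs ≤ Δ → ∀ {N n m : ℕ}, 1 ≤ n → n ≤ m → m ≤ N →
      (Lag lam Δ N n (phi lam Δ (N + 1))) ^ 2 ≤ C * exp (-2 * υ * Δ * Psi m N) := by
  refine ⟨exp (4 * ((1 - exp (-(Δs * υ)))⁻¹ * (1 - exp (-(Δs * υ)))⁻¹)), exp_pos _,
    fun Δ hΔ N n m hn hnm hmN => ?_⟩
  have hΔ0 : 0 < Δ := hΔs.trans_le hΔ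
  rw [Lag_sq_eq hmono hΔ0 hn (hnm.trans hmN), ← exp_add, exp_le_exp]
  have h1 := theta1_nonneg hmono hΔ0 N n
  have h2 := theta2_le hυ hgap hΔs hΔ n
  have h3 := theta3_le hυ hgap hΔs hΔ hn N
  have hS : υ * Psi m N ≤ ∑ j ∈ Icc (n + 1) N, (lam j - lam n) :=
    (mul_le_mul_of_nonneg_left (Psi_anti hnm N) hυ.le).trans (mul_Psi_le_sum_sub hgap hn N)
  have := mul_le_mul_of_nonneg_left hS hΔ0.le
  linarith

theorem stmt16_general (lam : ℕ → ℝ) (υ Υ : ℝ) (hυ : 0 < υ)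
    (hmono : ∀ n m : ℕ, 1 ≤ n → n < m → lam n < lam m)
    (hgap : ∀ n m : ℕ, 1 ≤ n → n ≤ m →
      υ * ((m : ℝ) ^ 2 - (n : ℝ) ^ 2) ≤ lam m - lam n ∧
      lam m - lam n ≤ Υ * ((m : ℝ) ^ 2 - (n : ℝ) ^ 2)) :
    -- exact identity for L_n(φ_{N₁+1})²
    (∀ Δ : ℝ, 0 < Δ → ∀ N₁ n : ℕ, 1 ≤ n → n ≤ N₁ →
      (Lag lam Δ N₁ n (phi lam Δ (N₁ + 1))) ^ 2 =
        Real.exp (-2 * Δ * (∑ j ∈ Finset.Icc (n + 1) N₁, (lam j - lam n)) -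
          2 * theta1 lam Δ N₁ n + 2 * theta2 lam Δ n + 2 * theta3 lam Δ N₁ n)) ∧
    -- asymptotic upper bound
    (∀ Δs : ℝ, 0 < Δs → ∀ η : ℝ, 0 < η → η ≤ 1 →
      ∃ C : ℝ, 0 < C ∧ ∃ N₀ : ℕ,
        ∀ Δ : ℝ, Δs ≤ Δ → ∀ N₁ : ℕ, N₀ ≤ N₁ →
          ∀ n : ℕ, 1 ≤ n → n ≤ ⌊η * (N₁ : ℝ)⌋₊ →
            (Lag lam Δ N₁ n (phi lam Δ (N₁ + 1))) ^ 2 ≤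
              C * Real.exp (-2 * υ * Δ * Psi ⌊η * (N₁ : ℝ)⌋₊ N₁)) := by
  refine ⟨fun Δ hΔ N₁ n hn hnN => Lag_sq_eq hmono hΔ hn hnN, fun Δs hΔs η _ hη1 => ?_⟩
  obtain ⟨C, hC, hbound⟩ := Lag_sq_le hυ hmono (fun n m hn hnm => (hgap n m hn hnm).1) hΔs
  refine ⟨C, hC, 0, fun Δ hΔ N₁ _ n hn hnm => hbound Δ hΔ hn hnm ?_⟩
  exact Nat.floor_le_of_le (mul_le_of_le_one_left (Nat.cast_nonneg N₁) hη1)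

theorem stmt16 (lam : ℕ → ℝ) (υ Υ : ℝ) (hυ : 0 < υ) (hυΥ : υ ≤ Υ)
    (hmono : ∀ n m : ℕ, 1 ≤ n → n < m → lam n < lam m)
    (hgap : ∀ n m : ℕ, 1 ≤ n → n ≤ m →
      υ * ((m : ℝ) ^ 2 - (n : ℝ) ^ 2) ≤ lam m - lam n ∧
      lam m - lam n ≤ Υ * ((m : ℝ) ^ 2 - (n : ℝ) ^ 2)) :
    -- exact identity for L_n(φ_{N₁+1})²
    (∀ Δ : ℝ, 0 < Δ → ∀ N₁ n : ℕ, 1 ≤ n → n ≤ N₁ →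
      (Lag lam Δ N₁ n (phi lam Δ (N₁ + 1))) ^ 2 =
        Real.exp (-2 * Δ * (∑ j ∈ Finset.Icc (n + 1) N₁, (lam j - lam n)) -
          2 * theta1 lam Δ N₁ n + 2 * theta2 lam Δ n + 2 * theta3 lam Δ N₁ n)) ∧
    -- asymptotic upper bound
    (∀ Δs : ℝ, 0 < Δs → ∀ η : ℝ, 0 < η → η ≤ 1 →
      ∃ C : ℝ, 0 < C ∧ ∃ N₀ : ℕ,
        ∀ Δ : ℝ, Δs ≤ Δ → ∀ N₁ : ℕ, N₀ ≤ N₁ →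
          ∀ n : ℕ, 1 ≤ n → n ≤ ⌊η * (N₁ : ℝ)⌋₊ →
            (Lag lam Δ N₁ n (phi lam Δ (N₁ + 1))) ^ 2 ≤
              C * Real.exp (-2 * υ * Δ * Psi ⌊η * (N₁ : ℝ)⌋₊ N₁)) :=
  stmt16_general lam υ Υ hυ hmono hgap
end
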